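/- For every σ ∈ Θ_r: B(T_r(σ)) = T_r(σ̄), where σ̄ is obtained from σ ∈ Υ_r by replacing every ∧ by ∨ and every ∨ by ∧, and ᾱ = ω, ω̄ = α. -/

import Mathlib

/-- The ground set `[n] = {1, …, n}` as a finset of naturals. -/
def ground (n : ℕ) : Finset ℕ := Finset.Icc 1 n

/-- The nested condition `j ∈ e σ₁ (j+1 ∈ e σ₂ (⋯))` determined by a sequence `σ`
over `{∧, ∨}` (where `false` encodes `∧` and `true` encodes `∨`). -/
def setCond (e : Finset ℕ) : ℕ → List Bool → Bool
  | j, [] => decide (j ∈ e)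
  | j, false :: s => decide (j ∈ e) && setCond e (j + 1) s
  | j, true :: s => decide (j ∈ e) || setCond e (j + 1) s

/-- `Θ_r = Υ_r ∪ {α, ω}` (elements of `Υ_r` are sequences over `{∧, ∨}`, with
`false` encoding `∧` and `true` encoding `∨`). -/
inductive Theta where
  | alpha : Theta
  | seq (σ : List Bool) : Theta
  | omega : Theta

/-- Membership in `Θ_r`: a sequence must contain fewer than `r` symbols `∧`
and fewer than `r` symbols `∨`. -/
def Theta.valid (r : ℕ) : Theta → Prop
  | .seq σ => σ.count false < r ∧ σ.count true < r
  | _ => True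

/-- `T_r(σ)` for `σ ∈ Θ_r`: the `r`-subsets of `[n]` satisfying the nested condition
given by `σ`; `T_r(α) = ∅` and `T_r(ω) = the family of all r-subsets of [n]`. -/
def Theta.Tset (n r : ℕ) : Theta → Finset (Finset ℕ)
  | .alpha => ∅
  | .seq σ => (Finset.powersetCard r (ground n)).filter (fun e => setCond e 1 σ = true)
  | .omega => Finset.powersetCard r (ground n)

/-- Encode the symbols for the lexicographic comparison: `∧ ↦ 0`, `* ↦ 1`, `∨ ↦ 2`. -/
def symCode (b : Bool) : ℕ := if b then 2 else 0

/-- The order on `Θ_r`: `α` is minimal, `ω` is maximal, and sequences are compared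
lexicographically after appending `*`, with `∧ < * < ∨`. -/
def Theta.lt : Theta → Theta → Prop
  | _, .alpha => False
  | .alpha, _ => True
  | .omega, _ => False
  | _, .omega => True
  | .seq σ, .seq τ => List.Lex (· < ·) (σ.map symCode ++ [1]) (τ.map symCode ++ [1])

/-- The position of an element of `Θ_r` in the linear order on `Θ_r`
(the number of elements of `Θ_r` strictly below it; `α` has position `0`). -/
noncomputable def Theta.posOf (r : ℕ) (t : Theta) : ℕ :=
  Set.ncard {x : Theta | x.valid r ∧ x.lt t}

/-- The blocker `B(F)`: the `r`-subsets of `[n]` meeting every member of `F`. -/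
def blockerT (n r : ℕ) (F : Finset (Finset ℕ)) : Finset (Finset ℕ) :=
  (Finset.powersetCard r (ground n)).filter (fun e => ∀ f ∈ F, (e ∩ f).Nonempty)

/-- `σ̄`: interchange `∧` and `∨`; `ᾱ = ω` and `ω̄ = α`. -/
def Theta.bar : Theta → Theta
  | .alpha => .omega
  | .seq σ => .seq (σ.map not)
  | .omega => .alpha

/-!
An `r`-set `e` satisfying `σ̄` meets every `f` satisfying `σ`: at each position one of the two
nested conditions is a conjunction, which forces `j` into its set, while the other is a
disjunction, which either puts `j` into its set or passes to the tail. Conversely, if `e` fails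
`σ̄`, then by De Morgan `[n] \ e` satisfies `σ`, and a witness for this uses one element per `∧`
plus one, hence at most `r` elements. As `|[n] \ e| = n - r ≥ r`, that witness extends to an
`r`-set disjoint from `e` that satisfies `σ`, so `e` is not in the blocker.
-/

open Finset

section setCond

variable {e f g : Finset ℕ}

lemma setCond_mono (hef : e ⊆ f) :
    ∀ (s : List Bool) (j : ℕ), setCond e j s = true → setCond f j s = true
  | [], j, h => by
    simp only [setCond, decide_eq_true_eq] at h ⊢
    exact hef h
  | false :: s, j, h => by
    simp only [setCond, Bool.and_eq_true, decide_eq_true_eq] at h ⊢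
    exact ⟨hef h.1, setCond_mono hef s (j + 1) h.2⟩
  | true :: s, j, h => by
    simp only [setCond, Bool.or_eq_true, decide_eq_true_eq] at h ⊢
    exact h.imp (@hef j) (setCond_mono hef s (j + 1))

lemma inter_nonempty_of_setCond_map_not :
    ∀ (s : List Bool) (j : ℕ), setCond e j (s.map not) = true → setCond f j s = true →
      (e ∩ f).Nonempty
  | [], j, he, hf => by
    simp only [List.map, setCond, decide_eq_true_eq] at he hf
    exact ⟨j, mem_inter.2 ⟨he, hf⟩⟩
  | false :: s, j, he, hf => by
    simp only [List.map, Bool.not_false, setCond, Bool.or_eq_true, Bool.and_eq_true,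
      decide_eq_true_eq] at he hf
    exact he.elim (fun hj => ⟨j, mem_inter.2 ⟨hj, hf.1⟩⟩)
      (fun he => inter_nonempty_of_setCond_map_not s (j + 1) he hf.2)
  | true :: s, j, he, hf => by
    simp only [List.map, Bool.not_true, setCond, Bool.or_eq_true, Bool.and_eq_true,
      decide_eq_true_eq] at he hf
    exact hf.elim (fun hj => ⟨j, mem_inter.2 ⟨he.1, hj⟩⟩)
      (fun hf => inter_nonempty_of_setCond_map_not s (j + 1) he.2 hf)

lemma setCond_map_not_eq_not_setCond_sdiff {n : ℕ} :
    ∀ (s : List Bool) (j : ℕ), 1 ≤ j → j + s.length ≤ n →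
      setCond e j (s.map not) = !setCond (ground n \ e) j s
  | [], j, hj, hjn => by
    simp [setCond, ground, hj, show j ≤ n by simpa using hjn]
  | b :: s, j, hj, hjn => by
    have hjn' : j + 1 + s.length ≤ n := by simp only [List.length_cons] at hjn; omega
    have ih := setCond_map_not_eq_not_setCond_sdiff s (j + 1) (by omega) hjn'
    cases b <;> simp [setCond, ground, ih, hj, show j ≤ n by omega]

lemma exists_subset_card_le_setCond :
    ∀ (s : List Bool) (j : ℕ), setCond g j s = true →
      ∃ R ⊆ g, R.card ≤ s.count false + 1 ∧ setCond R j s = true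
  | [], j, h => by
    simp only [setCond, decide_eq_true_eq] at h
    exact ⟨{j}, singleton_subset_iff.2 h, by simp, by simp [setCond]⟩
  | false :: s, j, h => by
    simp only [setCond, Bool.and_eq_true, decide_eq_true_eq] at h
    obtain ⟨R, hRg, hRcard, hR⟩ := exists_subset_card_le_setCond s (j + 1) h.2
    refine ⟨insert j R, insert_subset h.1 hRg, ?_, ?_⟩
    · grw [card_insert_le, hRcard]
      simp
    · simp [setCond, setCond_mono (subset_insert j R) s (j + 1) hR]
  | true :: s, j, h => by
    simp only [setCond, Bool.or_eq_true, decide_eq_true_eq] at h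
    rcases h with hj | h
    · exact ⟨{j}, singleton_subset_iff.2 hj, by simp, by simp [setCond]⟩
    · obtain ⟨R, hRg, hRcard, hR⟩ := exists_subset_card_le_setCond s (j + 1) h
      exact ⟨R, hRg, by simpa using hRcard, by simp [setCond, hR]⟩

end setCond

lemma exists_mem_powersetCard_superset_disjoint {n r : ℕ} (hn : 2 * r ≤ n)
    {e R : Finset ℕ} (he : e ∈ powersetCard r (ground n)) (hR : R ⊆ ground n \ e)
    (hRr : R.card ≤ r) :
    ∃ f ∈ powersetCard r (ground n), R ⊆ f ∧ Disjoint e f := by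
  obtain ⟨heg, hecard⟩ := mem_powersetCard.1 he
  have hr : r ≤ (ground n \ e).card := by
    rw [card_sdiff_of_subset heg, hecard, ground, Nat.card_Icc]
    omega
  obtain ⟨f, hRf, hf, hfcard⟩ := exists_subsuperset_card_eq hR hRr hr
  exact ⟨f, mem_powersetCard.2 ⟨hf.trans sdiff_subset, hfcard⟩, hRf,
    disjoint_of_subset_right hf disjoint_sdiff⟩

lemma notMem_blockerT_of_disjoint {n r : ℕ} {F : Finset (Finset ℕ)} {e f : Finset ℕ}
    (hf : f ∈ F) (hef : Disjoint e f) : e ∉ blockerT n r F := by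
  simp only [blockerT, mem_filter, not_and, not_forall]
  exact fun _ => ⟨f, hf, by rwa [not_nonempty_iff_eq_empty, ← disjoint_iff_inter_eq_empty]⟩

lemma blockerT_empty (n r : ℕ) : blockerT n r ∅ = powersetCard r (ground n) := by
  simp [blockerT]

lemma blockerT_powersetCard {n r : ℕ} (hn : 2 * r ≤ n) :
    blockerT n r (powersetCard r (ground n)) = ∅ := by
  refine eq_empty_of_forall_notMem fun e he => ?_
  obtain ⟨f, hf, -, hef⟩ := exists_mem_powersetCard_superset_disjoint hn
    (mem_of_mem_filter e he) (empty_subset _) (Nat.zero_le r)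
  exact notMem_blockerT_of_disjoint hf hef he

lemma blockerT_Tset_seq {n r : ℕ} (hn : 2 * r ≤ n) {s : List Bool}
    (hs : (Theta.seq s).valid r) :
    blockerT n r ((Theta.seq s).Tset n r) = (Theta.seq s).bar.Tset n r := by
  obtain ⟨hfalse, htrue⟩ := hs
  ext e
  simp only [Theta.bar, Theta.Tset]
  constructor
  · intro he
    have hep := mem_of_mem_filter e he
    refine mem_filter.2 ⟨hep, ?_⟩
    by_contra hbar
    have hlen : 1 + s.length ≤ n := by
      have := List.count_false_add_count_true s
      omega
    have hsdiff : setCond (ground n \ e) 1 s = true := by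
      simpa [setCond_map_not_eq_not_setCond_sdiff s 1 le_rfl hlen] using hbar
    obtain ⟨R, hRsub, hRcard, hR⟩ := exists_subset_card_le_setCond s 1 hsdiff
    obtain ⟨f, hf, hRf, hef⟩ :=
      exists_mem_powersetCard_superset_disjoint hn hep hRsub (by omega)
    exact notMem_blockerT_of_disjoint (mem_filter.2 ⟨hf, setCond_mono hRf s 1 hR⟩) hef he
  · intro he
    obtain ⟨hep, hbar⟩ := mem_filter.1 he
    exact mem_filter.2 ⟨hep, fun f hf =>
      inter_nonempty_of_setCond_map_not s 1 hbar (mem_filter.1 hf).2⟩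

theorem stmt17_general (r n : ℕ) (hn : 2 * r ≤ n)
    (σ : Theta) (hσ : σ.valid r) :
    blockerT n r (σ.Tset n r) = σ.bar.Tset n r := by
  cases σ with
  | alpha => exact blockerT_empty n r
  | omega => exact blockerT_powersetCard hn
  | seq s => exact blockerT_Tset_seq hn hσ

theorem stmt17 (r n : ℕ) (hr : 1 ≤ r) (hn : 2 * r ≤ n)
    (σ : Theta) (hσ : σ.valid r) :
    blockerT n r (σ.Tset n r) = σ.bar.Tset n r :=
  stmt17_general r n hn σ hσ
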